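/- Let P0, P1 ⊆ R^{d-1} be (d-1)-polytopes, P their Cayley embedding in R^d, F0 a nonempty face of P0, F1 a nonempty face of P1, and F the Cayley embedding of F0 and F1, assumed to be a face of P. Then for (r, α) ∈ R^{d-1} × R, one has (r, α) ∈ C_P(F) if and only if r ∈ C_{P0}(F0) ∩ C_{P1}(F1) and α = max{r·x : x ∈ P0} − max{r·x : x ∈ P1}. -/
import Mathlib


open Set Pointwise

noncomputable section

/-- Dot product of two vectors in `Fin n → ℝ`. -/
def dotp {n : ℕ} (c x : Fin n → ℝ) : ℝ := ∑ i, c i * x i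

/-- Dimension of a subset of `Fin n → ℝ` (dimension of its affine hull). -/
def sdim {n : ℕ} (S : Set (Fin n → ℝ)) : ℕ := Module.finrank ℝ (vectorSpan ℝ S)

/-- A polytope is the convex hull of a finite set. -/
def IsPolytope {n : ℕ} (P : Set (Fin n → ℝ)) : Prop :=
  ∃ S : Finset (Fin n → ℝ), P = convexHull ℝ (S : Set (Fin n → ℝ))

/-- The set of maximizers of the linear functional `dotp c` over `P`. -/
def maxFace {n : ℕ} (P : Set (Fin n → ℝ)) (c : Fin n → ℝ) : Set (Fin n → ℝ) :=
  {x ∈ P | ∀ y ∈ P, dotp c y ≤ dotp c x}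

/-- `F` is a (nonempty, possibly improper) face of the polytope `P`: the set of
maximizers of some linear functional over `P`. -/
def IsFaceOf {n : ℕ} (P F : Set (Fin n → ℝ)) : Prop := ∃ c, F = maxFace P c

/-- The optimality cone of a face `F` of `P`: the set of `c` whose set of maximizers
over `P` is exactly `F`. -/
def optCone {n : ℕ} (P F : Set (Fin n → ℝ)) : Set (Fin n → ℝ) := {c | maxFace P c = F}

/-- A facet: a nonempty face of codimension 1. -/
def IsFacetOf {n : ℕ} (P F : Set (Fin n → ℝ)) : Prop :=
  IsFaceOf P F ∧ F.Nonempty ∧ sdim F + 1 = sdim P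

/-- Embedding of a subset of `Fin d → ℝ` at height `α` in `Fin (d+1) → ℝ`. -/
def cay {d : ℕ} (α : ℝ) (S : Set (Fin d → ℝ)) : Set (Fin (d + 1) → ℝ) :=
  (fun x => Fin.snoc x α) '' S

/-- Orthogonal projection onto the first `d` coordinates. -/
def projd {d m : ℕ} (x : Fin (d + m) → ℝ) : Fin d → ℝ := fun i => x (Fin.castAdd m i)

/-- Width of a set in direction `c`. -/
def width {n : ℕ} (S : Set (Fin n → ℝ)) (c : Fin n → ℝ) : ℝ :=
  sSup (dotp c '' S) - sInf (dotp c '' S)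

/-- `P'` is an `ε`-approximation of `P`. -/
def EpsApprox {n : ℕ} (ε : ℝ) (P P' : Set (Fin n → ℝ)) : Prop :=
  P ⊆ P' ∧ ∀ c, width P' c ≤ (1 + ε) * width P c

/-- Binary entropy function (with the convention `0 · log₂ 0 = 0`, which holds for
`Real.logb` since `Real.logb 2 0 = 0`). -/
def binEnt (p : ℝ) : ℝ := -(p * Real.logb 2 p) - (1 - p) * Real.logb 2 (1 - p)


section Aux

variable {n : ℕ}

lemma dotp_add (c x y : Fin n → ℝ) : dotp c (x + y) = dotp c x + dotp c y := by
  simp [dotp, mul_add, Finset.sum_add_distrib]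

lemma dotp_smul (c : Fin n → ℝ) (s : ℝ) (x : Fin n → ℝ) : dotp c (s • x) = s * dotp c x := by
  simp [dotp, Finset.mul_sum, mul_left_comm]

lemma isLinearMap_dotp (c : Fin n → ℝ) : IsLinearMap ℝ (dotp c) :=
  ⟨fun x y => dotp_add c x y, fun s x => dotp_smul c s x⟩

lemma dotp_smul_add (c : Fin n → ℝ) (s t : ℝ) (x y : Fin n → ℝ) :
    dotp c (s • x + t • y) = s * dotp c x + t * dotp c y := by
  rw [dotp_add, dotp_smul, dotp_smul]

lemma dotp_sum {ι : Type*} (c : Fin n → ℝ) (t : Finset ι) (w : ι → ℝ) (z : ι → Fin n → ℝ) :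
    dotp c (∑ i ∈ t, w i • z i) = ∑ i ∈ t, w i * dotp c (z i) := by
  simp only [dotp, Finset.mul_sum, Finset.sum_apply, Pi.smul_apply, smul_eq_mul]
  rw [Finset.sum_comm]
  exact Finset.sum_congr rfl fun i _ => Finset.sum_congr rfl fun j _ => by ring

lemma convex_maxFace {P : Set (Fin n → ℝ)} (hP : Convex ℝ P) (c : Fin n → ℝ) :
    Convex ℝ (maxFace P c) := by
  intro a ha b hb s t hs ht hst
  refine ⟨hP ha.1 hb.1 hs ht hst, fun y hy => ?_⟩
  rw [dotp_smul_add]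
  calc dotp c y = s * dotp c y + t * dotp c y := by rw [← add_mul, hst, one_mul]
    _ ≤ s * dotp c a + t * dotp c b :=
      add_le_add (mul_le_mul_of_nonneg_left (ha.2 y hy) hs)
        (mul_le_mul_of_nonneg_left (hb.2 y hy) ht)

lemma maxFace_convexHull (S : Set (Fin n → ℝ)) (c : Fin n → ℝ) :
    maxFace (convexHull ℝ S) c = convexHull ℝ (maxFace S c) := by
  apply Set.Subset.antisymm
  · rintro x ⟨hx, hmax⟩
    rw [convexHull_eq] at hx
    obtain ⟨ι, t, w, z, hw0, hw1, hz, hxc⟩ := hx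
    have hrep : x = ∑ i ∈ t, w i • z i := by
      rw [← hxc, Finset.centerMass_eq_of_sum_1 _ _ hw1]
    have hval : dotp c x = ∑ i ∈ t, w i * dotp c (z i) := by
      rw [hrep, dotp_sum]
    have hle : ∀ i ∈ t, dotp c (z i) ≤ dotp c x := fun i hi =>
      hmax _ (subset_convexHull ℝ S (hz i hi))
    have hkey : ∀ i ∈ t, w i ≠ 0 → z i ∈ maxFace S c := by
      intro i hi hwi
      refine ⟨hz i hi, fun y hy => ?_⟩
      have hyx : dotp c y ≤ dotp c x := hmax _ (subset_convexHull ℝ S hy)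
      have : dotp c x = dotp c (z i) := by
        by_contra hne
        have hlt : dotp c (z i) < dotp c x := lt_of_le_of_ne (hle i hi) fun h => hne h.symm
        have hwpos : 0 < w i := lt_of_le_of_ne (hw0 i hi) (Ne.symm hwi)
        have : ∑ j ∈ t, w j * dotp c (z j) < ∑ j ∈ t, w j * dotp c x :=
          Finset.sum_lt_sum
            (fun j hj => mul_le_mul_of_nonneg_left (hle j hj) (hw0 j hj))
            ⟨i, hi, by exact mul_lt_mul_of_pos_left hlt hwpos⟩
        rw [← Finset.sum_mul, hw1, one_mul, ← hval] at this
        exact lt_irrefl _ this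
      linarith [this]
    rw [← hxc, ← Finset.centerMass_filter_ne_zero]
    refine Finset.centerMass_mem_convexHull _ (fun i hi => hw0 i (Finset.mem_filter.mp hi).1)
      ?_ (fun i hi => hkey i (Finset.mem_filter.mp hi).1 (Finset.mem_filter.mp hi).2)
    rw [Finset.sum_filter_ne_zero, hw1]
    exact one_pos
  · intro x hx
    have hne : (maxFace S c).Nonempty := by
      by_contra h
      rw [Set.not_nonempty_iff_eq_empty] at h
      rw [h, convexHull_empty] at hx
      exact hx
    obtain ⟨m, hm⟩ := hne
    have hconst : ∀ y ∈ maxFace S c, dotp c m ≤ dotp c y := fun y hy => hy.2 m hm.1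
    have hxge : dotp c m ≤ dotp c x := by
      have hsub : convexHull ℝ (maxFace S c) ⊆ {y | dotp c m ≤ dotp c y} :=
        convexHull_min (fun y hy => hconst y hy) (convex_halfSpace_ge (isLinearMap_dotp c) _)
      exact hsub hx
    refine ⟨convexHull_mono (fun y hy => hy.1) hx, fun y hy => ?_⟩
    have hsub : convexHull ℝ S ⊆ {y | dotp c y ≤ dotp c m} :=
      convexHull_min (fun y hy => hm.2 y hy) (convex_halfSpace_le (isLinearMap_dotp c) _)
    exact le_trans (hsub hy) hxge

lemma maxFace_nonempty {P : Set (Fin n → ℝ)} (h : IsPolytope P) (hne : P.Nonempty)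
    (c : Fin n → ℝ) : (maxFace P c).Nonempty := by
  obtain ⟨S, rfl⟩ := h
  rw [maxFace_convexHull]
  have hS : S.Nonempty := by
    rcases S.eq_empty_or_nonempty with h | h
    · rw [h] at hne; simp at hne
    · exact h
  obtain ⟨b, hb, hbmax⟩ := S.exists_max_image (dotp c) hS
  exact ⟨b, subset_convexHull ℝ _ ⟨hb, fun y hy => hbmax y hy⟩⟩

end Aux

section CayAux

variable {d : ℕ}

lemma snoc_add (x y : Fin d → ℝ) (a b : ℝ) :
    (Fin.snoc x a + Fin.snoc y b : Fin (d + 1) → ℝ) = Fin.snoc (x + y) (a + b) := by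
  funext i
  induction i using Fin.lastCases with
  | last => simp
  | cast i => simp

lemma smul_snoc (s : ℝ) (x : Fin d → ℝ) (a : ℝ) :
    s • (Fin.snoc x a : Fin (d + 1) → ℝ) = Fin.snoc (s • x) (s * a) := by
  funext i
  induction i using Fin.lastCases with
  | last => simp
  | cast i => simp

lemma dotp_snoc (r : Fin d → ℝ) (α : ℝ) (x : Fin d → ℝ) (β : ℝ) :
    dotp (Fin.snoc r α) (Fin.snoc x β) = dotp r x + α * β := by
  simp [dotp, Fin.sum_univ_castSucc]

lemma snoc_injective (β : ℝ) : Function.Injective (fun x : Fin d → ℝ => (Fin.snoc x β : Fin (d + 1) → ℝ)) := by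
  intro x y h
  funext i
  have := congrFun h (Fin.castSucc i)
  simpa using this

lemma cay_convex {β : ℝ} {X : Set (Fin d → ℝ)} (hX : Convex ℝ X) : Convex ℝ (cay β X) := by
  rintro _ ⟨a, ha, rfl⟩ _ ⟨b, hb, rfl⟩ s t hs ht hst
  refine ⟨s • a + t • b, hX ha hb hs ht hst, ?_⟩
  rw [smul_snoc, smul_snoc, snoc_add, ← add_mul, hst, one_mul]

lemma cay_nonempty {β : ℝ} {X : Set (Fin d → ℝ)} (hX : X.Nonempty) : (cay β X).Nonempty :=
  ⟨_, ⟨hX.choose, hX.choose_spec, rfl⟩⟩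

lemma last_eq_of_mem_cay {β : ℝ} {X : Set (Fin d → ℝ)} {v : Fin (d + 1) → ℝ}
    (hv : v ∈ cay β X) : v (Fin.last d) = β := by
  obtain ⟨x, _, rfl⟩ := hv
  simp

lemma last_eq_of_mem_hull_cay {β : ℝ} {X : Set (Fin d → ℝ)} {v : Fin (d + 1) → ℝ}
    (hv : v ∈ convexHull ℝ (cay β X)) : v (Fin.last d) = β := by
  have hsub : convexHull ℝ (cay β X) ⊆ {w | w (Fin.last d) = β} :=
    convexHull_min (fun w hw => last_eq_of_mem_cay hw)
      (convex_hyperplane (⟨fun _ _ => rfl, fun _ _ => rfl⟩ :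
        IsLinearMap ℝ (fun w : Fin (d + 1) → ℝ => w (Fin.last d))) β)
  exact hsub hv

lemma cay_inj {β : ℝ} {X Y : Set (Fin d → ℝ)} (h : cay β X = cay β Y) : X = Y :=
  Set.image_injective.mpr (snoc_injective β) h

lemma mem_cay_zero_of_mem_hull {X0 X1 : Set (Fin d → ℝ)}
    (hX0 : Convex ℝ X0) (hX1 : Convex ℝ X1) (hX0n : X0.Nonempty) (hX1n : X1.Nonempty)
    {v : Fin (d + 1) → ℝ} (hv : v ∈ convexHull ℝ (cay 0 X0 ∪ cay 1 X1))
    (h0 : v (Fin.last d) = 0) : v ∈ cay 0 X0 := by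
  rw [Convex.convexHull_union (cay_convex hX0) (cay_convex hX1)
    (cay_nonempty hX0n) (cay_nonempty hX1n), mem_convexJoin] at hv
  obtain ⟨a, ha, b, hb, hseg⟩ := hv
  obtain ⟨s, t, hs, ht, hst, rfl⟩ := hseg
  have hlast : (s • a + t • b) (Fin.last d) = t := by
    have ha' := last_eq_of_mem_cay ha
    have hb' := last_eq_of_mem_cay hb
    simp [ha', hb']
  rw [hlast] at h0
  subst h0
  have hs1 : s = 1 := by linarith
  subst hs1
  simpa using ha

lemma mem_cay_one_of_mem_hull {X0 X1 : Set (Fin d → ℝ)}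
    (hX0 : Convex ℝ X0) (hX1 : Convex ℝ X1) (hX0n : X0.Nonempty) (hX1n : X1.Nonempty)
    {v : Fin (d + 1) → ℝ} (hv : v ∈ convexHull ℝ (cay 0 X0 ∪ cay 1 X1))
    (h1 : v (Fin.last d) = 1) : v ∈ cay 1 X1 := by
  rw [Convex.convexHull_union (cay_convex hX0) (cay_convex hX1)
    (cay_nonempty hX0n) (cay_nonempty hX1n), mem_convexJoin] at hv
  obtain ⟨a, ha, b, hb, hseg⟩ := hv
  obtain ⟨s, t, hs, ht, hst, rfl⟩ := hseg
  have hlast : (s • a + t • b) (Fin.last d) = t := by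
    have ha' := last_eq_of_mem_cay ha
    have hb' := last_eq_of_mem_cay hb
    simp [ha', hb']
  rw [hlast] at h1
  subst h1
  have hs0 : s = 0 := by linarith
  subst hs0
  simpa using hb

lemma cay_hull_eq_iff {X0 X1 Y0 Y1 : Set (Fin d → ℝ)}
    (hX0 : Convex ℝ X0) (hX1 : Convex ℝ X1) (hY0 : Convex ℝ Y0) (hY1 : Convex ℝ Y1)
    (hX0n : X0.Nonempty) (hX1n : X1.Nonempty) (hY0n : Y0.Nonempty) (hY1n : Y1.Nonempty)
    (h : convexHull ℝ (cay 0 X0 ∪ cay 1 X1) = convexHull ℝ (cay 0 Y0 ∪ cay 1 Y1)) :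
    X0 = Y0 ∧ X1 = Y1 := by
  constructor
  · apply cay_inj (β := (0 : ℝ))
    apply Set.Subset.antisymm
    · intro v hv
      have hm : v ∈ convexHull ℝ (cay 0 Y0 ∪ cay 1 Y1) := by
        rw [← h]
        exact subset_convexHull ℝ _ (Set.mem_union_left _ hv)
      exact mem_cay_zero_of_mem_hull hY0 hY1 hY0n hY1n hm (last_eq_of_mem_cay hv)
    · intro v hv
      have hm : v ∈ convexHull ℝ (cay 0 X0 ∪ cay 1 X1) := by
        rw [h]
        exact subset_convexHull ℝ _ (Set.mem_union_left _ hv)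
      exact mem_cay_zero_of_mem_hull hX0 hX1 hX0n hX1n hm (last_eq_of_mem_cay hv)
  · apply cay_inj (β := (1 : ℝ))
    apply Set.Subset.antisymm
    · intro v hv
      have hm : v ∈ convexHull ℝ (cay 0 Y0 ∪ cay 1 Y1) := by
        rw [← h]
        exact subset_convexHull ℝ _ (Set.mem_union_right _ hv)
      exact mem_cay_one_of_mem_hull hY0 hY1 hY0n hY1n hm (last_eq_of_mem_cay hv)
    · intro v hv
      have hm : v ∈ convexHull ℝ (cay 0 X0 ∪ cay 1 X1) := by
        rw [h]
        exact subset_convexHull ℝ _ (Set.mem_union_right _ hv)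
      exact mem_cay_one_of_mem_hull hX0 hX1 hX0n hX1n hm (last_eq_of_mem_cay hv)

/-- maxFace of the union of the two Cayley layers, case of equal maxima. -/
lemma maxFace_cay_union_eq {P0 P1 : Set (Fin d → ℝ)} (r : Fin d → ℝ) (α : ℝ)
    {m0 m1 : Fin d → ℝ} (hm0 : m0 ∈ maxFace P0 r) (hm1 : m1 ∈ maxFace P1 r)
    (hα : dotp r m0 = dotp r m1 + α) :
    maxFace (cay 0 P0 ∪ cay 1 P1) (Fin.snoc r α)
      = cay 0 (maxFace P0 r) ∪ cay 1 (maxFace P1 r) := by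
  apply Set.Subset.antisymm
  · rintro z ⟨hz, hzmax⟩
    rcases hz with ⟨x, hx, rfl⟩ | ⟨y, hy, rfl⟩
    · refine Set.mem_union_left _ ⟨x, ⟨hx, fun y' hy' => ?_⟩, rfl⟩
      have := hzmax _ (Set.mem_union_left _ ⟨y', hy', rfl⟩)
      rw [dotp_snoc, dotp_snoc] at this
      linarith
    · refine Set.mem_union_right _ ⟨y, ⟨hy, fun y' hy' => ?_⟩, rfl⟩
      have := hzmax _ (Set.mem_union_right _ ⟨y', hy', rfl⟩)
      rw [dotp_snoc, dotp_snoc] at this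
      linarith
  · rintro z (⟨x, hx, rfl⟩ | ⟨y, hy, rfl⟩)
    · have hx0 : dotp r m0 ≤ dotp r x := hx.2 m0 hm0.1
      refine ⟨Set.mem_union_left _ ⟨x, hx.1, rfl⟩, ?_⟩
      rintro _ (⟨y', hy', rfl⟩ | ⟨y', hy', rfl⟩) <;> rw [dotp_snoc, dotp_snoc]
      · have := hx.2 y' hy'
        linarith
      · have := hm1.2 y' hy'
        linarith
    · have hy1 : dotp r m1 ≤ dotp r y := hy.2 m1 hm1.1
      refine ⟨Set.mem_union_right _ ⟨y, hy.1, rfl⟩, ?_⟩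
      rintro _ (⟨y', hy', rfl⟩ | ⟨y', hy', rfl⟩) <;> rw [dotp_snoc, dotp_snoc]
      · have := hm0.2 y' hy'
        linarith
      · have := hy.2 y' hy'
        linarith

/-- maxFace of the union, case where the bottom layer dominates. -/
lemma maxFace_cay_union_lt {P0 P1 : Set (Fin d → ℝ)} (r : Fin d → ℝ) (α : ℝ)
    {m0 m1 : Fin d → ℝ} (hm0 : m0 ∈ maxFace P0 r) (hm1 : m1 ∈ maxFace P1 r)
    (hα : dotp r m1 + α < dotp r m0) :
    maxFace (cay 0 P0 ∪ cay 1 P1) (Fin.snoc r α) = cay 0 (maxFace P0 r) := by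
  apply Set.Subset.antisymm
  · rintro z ⟨hz, hzmax⟩
    rcases hz with ⟨x, hx, rfl⟩ | ⟨y, hy, rfl⟩
    · refine ⟨x, ⟨hx, fun y' hy' => ?_⟩, rfl⟩
      have := hzmax _ (Set.mem_union_left _ ⟨y', hy', rfl⟩)
      rw [dotp_snoc, dotp_snoc] at this
      linarith
    · exfalso
      have h1 := hzmax _ (Set.mem_union_left _ ⟨m0, hm0.1, rfl⟩)
      rw [dotp_snoc, dotp_snoc] at h1
      have h2 := hm1.2 y hy
      linarith
  · rintro _ ⟨x, hx, rfl⟩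
    have hx0 : dotp r m0 ≤ dotp r x := hx.2 m0 hm0.1
    refine ⟨Set.mem_union_left _ ⟨x, hx.1, rfl⟩, ?_⟩
    rintro _ (⟨y', hy', rfl⟩ | ⟨y', hy', rfl⟩) <;> rw [dotp_snoc, dotp_snoc]
    · have := hx.2 y' hy'
      linarith
    · have := hm1.2 y' hy'
      linarith

/-- maxFace of the union, case where the top layer dominates. -/
lemma maxFace_cay_union_gt {P0 P1 : Set (Fin d → ℝ)} (r : Fin d → ℝ) (α : ℝ)
    {m0 m1 : Fin d → ℝ} (hm0 : m0 ∈ maxFace P0 r) (hm1 : m1 ∈ maxFace P1 r)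
    (hα : dotp r m0 < dotp r m1 + α) :
    maxFace (cay 0 P0 ∪ cay 1 P1) (Fin.snoc r α) = cay 1 (maxFace P1 r) := by
  apply Set.Subset.antisymm
  · rintro z ⟨hz, hzmax⟩
    rcases hz with ⟨x, hx, rfl⟩ | ⟨y, hy, rfl⟩
    · exfalso
      have h1 := hzmax _ (Set.mem_union_right _ ⟨m1, hm1.1, rfl⟩)
      rw [dotp_snoc, dotp_snoc] at h1
      have h2 := hm0.2 x hx
      linarith
    · refine ⟨y, ⟨hy, fun y' hy' => ?_⟩, rfl⟩
      have := hzmax _ (Set.mem_union_right _ ⟨y', hy', rfl⟩)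
      rw [dotp_snoc, dotp_snoc] at this
      linarith
  · rintro _ ⟨y, hy, rfl⟩
    have hy1 : dotp r m1 ≤ dotp r y := hy.2 m1 hm1.1
    refine ⟨Set.mem_union_right _ ⟨y, hy.1, rfl⟩, ?_⟩
    rintro _ (⟨y', hy', rfl⟩ | ⟨y', hy', rfl⟩) <;> rw [dotp_snoc, dotp_snoc]
    · have := hm0.2 y' hy'
      linarith
    · have := hy.2 y' hy'
      linarith

end CayAux

/-- Optimality cone of a face of the Cayley embedding: `(r, α)` lies in the
optimality cone of the Cayley embedding `F` of `F0`, `F1` iff `r` lies in both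
optimality cones and `α = max_{P0} r·x − max_{P1} r·x`. -/
theorem cayley_optCone (d : ℕ)
    (P0 P1 : Set (Fin d → ℝ)) (h0 : IsPolytope P0) (h1 : IsPolytope P1)
    (hne0 : P0.Nonempty) (hne1 : P1.Nonempty)
    (hd0 : sdim P0 = d) (hd1 : sdim P1 = d)
    (F0 F1 : Set (Fin d → ℝ))
    (hF0 : IsFaceOf P0 F0) (hF1 : IsFaceOf P1 F1)
    (hF0ne : F0.Nonempty) (hF1ne : F1.Nonempty)
    (P : Set (Fin (d + 1) → ℝ)) (hP : P = convexHull ℝ (cay 0 P0 ∪ cay 1 P1))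
    (F : Set (Fin (d + 1) → ℝ)) (hF : F = convexHull ℝ (cay 0 F0 ∪ cay 1 F1))
    (hFace : IsFaceOf P F) :
    ∀ (r : Fin d → ℝ) (α : ℝ),
      Fin.snoc r α ∈ optCone P F ↔
        (r ∈ optCone P0 F0 ∩ optCone P1 F1 ∧
          α = sSup (dotp r '' P0) - sSup (dotp r '' P1)) := by
  intro r α
  -- maximizers of `dotp r` over the two polytopes
  obtain ⟨m0, hm0⟩ := maxFace_nonempty h0 hne0 r
  obtain ⟨m1, hm1⟩ := maxFace_nonempty h1 hne1 r
  have hM0 : sSup (dotp r '' P0) = dotp r m0 :=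
    IsGreatest.csSup_eq ⟨⟨m0, hm0.1, rfl⟩, by rintro _ ⟨y, hy, rfl⟩; exact hm0.2 y hy⟩
  have hM1 : sSup (dotp r '' P1) = dotp r m1 :=
    IsGreatest.csSup_eq ⟨⟨m1, hm1.1, rfl⟩, by rintro _ ⟨y, hy, rfl⟩; exact hm1.2 y hy⟩
  have hP0conv : Convex ℝ P0 := by obtain ⟨S, rfl⟩ := h0; exact convex_convexHull ℝ _
  have hP1conv : Convex ℝ P1 := by obtain ⟨S, rfl⟩ := h1; exact convex_convexHull ℝ _
  have hF0conv : Convex ℝ F0 := by obtain ⟨c0, rfl⟩ := hF0; exact convex_maxFace hP0conv c0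
  have hF1conv : Convex ℝ F1 := by obtain ⟨c1, rfl⟩ := hF1; exact convex_maxFace hP1conv c1
  have hPm : maxFace P (Fin.snoc r α)
      = convexHull ℝ (maxFace (cay 0 P0 ∪ cay 1 P1) (Fin.snoc r α)) := by
    rw [hP, maxFace_convexHull]
  simp only [optCone, Set.mem_setOf_eq, Set.mem_inter_iff]
  constructor
  · intro h
    rcases lt_trichotomy (dotp r m0) (dotp r m1 + α) with hlt | heq | hgt
    · exfalso
      rw [maxFace_cay_union_gt r α hm0 hm1 hlt] at hPm
      obtain ⟨x0, hx0⟩ := hF0ne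
      have hmem : (Fin.snoc x0 0 : Fin (d + 1) → ℝ) ∈ F := by
        rw [hF]
        exact subset_convexHull ℝ _ (Set.mem_union_left _ ⟨x0, hx0, rfl⟩)
      rw [← h, hPm] at hmem
      have := last_eq_of_mem_hull_cay hmem
      simp at this
    · rw [maxFace_cay_union_eq r α hm0 hm1 heq] at hPm
      have hhull : convexHull ℝ (cay 0 (maxFace P0 r) ∪ cay 1 (maxFace P1 r))
          = convexHull ℝ (cay 0 F0 ∪ cay 1 F1) := by
        rw [← hPm, h, hF]
      obtain ⟨hG0, hG1⟩ := cay_hull_eq_iff (convex_maxFace hP0conv r)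
        (convex_maxFace hP1conv r) hF0conv hF1conv ⟨m0, hm0⟩ ⟨m1, hm1⟩ hF0ne hF1ne hhull
      exact ⟨⟨hG0, hG1⟩, by rw [hM0, hM1]; linarith⟩
    · exfalso
      rw [maxFace_cay_union_lt r α hm0 hm1 hgt] at hPm
      obtain ⟨x1, hx1⟩ := hF1ne
      have hmem : (Fin.snoc x1 1 : Fin (d + 1) → ℝ) ∈ F := by
        rw [hF]
        exact subset_convexHull ℝ _ (Set.mem_union_right _ ⟨x1, hx1, rfl⟩)
      rw [← h, hPm] at hmem
      have := last_eq_of_mem_hull_cay hmem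
      simp at this
  · rintro ⟨⟨hr0, hr1⟩, hα⟩
    rw [hM0, hM1] at hα
    have heq : dotp r m0 = dotp r m1 + α := by linarith
    rw [hPm, maxFace_cay_union_eq r α hm0 hm1 heq, hr0, hr1, hF]
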